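/- Consider the discrete repeated-PPM Gaussian model with horizon n = i + d (i ≥ 1, d ≥ 0) and normalized per-bit energy β > ln 2. There exists a constant K depending only on β (not on i, d, or b) such that for every true bit string b ∈ {0,1}^n, the probability that some candidate string c ∈ {0,1}^n agreeing with b in its first i−1 positions but with c_i ≠ b_i satisfies S(c) ≥ S(b) is at most K·exp(−(d+1)·E(β)). (This is the genie-aided suffix error bound: given the correct prefix, the true waveform suffix is orthogonal to all 2^d competing suffixes, so the block orthogonal-coding bound applies over duration (d+1) slots.) -/

import Mathlib

/-!
Condition on the noise along the true path. From slot `i` on, a competitor that leaves the true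
path at position `i` reads `d + 1` noise samples off the true path, and there are `2 ^ d` such
competitors. Given the true-path noise, the Chernoff bound controls each of them; bounding the
union by `min (1, ·) ≤ (·) ^ ρ` for `ρ ∈ [0, 1]` and averaging over the true-path noise gives
Gallager's bound `2 ^ (d ρ) · exp (-(d + 1) ρ β / (1 + ρ))`, and optimising over `ρ` yields the
exponent `E(β)`.
-/

open MeasureTheory ProbabilityTheory

/-- The index set of the discrete repeated-PPM Gaussian model with horizon `n`:
pairs `(k, s)` with `1 ≤ k ≤ n` (represented by `k : Fin n`, standing for slot
`k+1`) and `s ∈ {0,1}^{k+1}` a candidate bit prefix for that slot. -/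
abbrev PPMIdx (n : ℕ) : Type := Σ k : Fin n, (Fin (k.val + 1) → Bool)

/-- The length-`(k+1)` prefix of a bit string `c ∈ {0,1}^n`, for `k : Fin n`. -/
def prefixBits {n : ℕ} (c : Fin n → Bool) (k : Fin n) : Fin (k.val + 1) → Bool :=
  fun i => c (Fin.castLE k.isLt i)

/-- The score of a candidate string `c` in the discrete repeated-PPM Gaussian
model with true string `b`, noise realization `z` and normalized per-bit energy
`β`: `S(c) = ∑_k Y_{k,(c_1,…,c_k)}` where
`Y_{k,s} = √(2β)·1{s = (b_1,…,b_k)} + N_{k,s}`. -/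
noncomputable def ppmScore {n : ℕ} (β : ℝ) (b : Fin n → Bool)
    (z : PPMIdx n → ℝ) (c : Fin n → Bool) : ℝ :=
  ∑ k : Fin n,
    ((if prefixBits c k = prefixBits b k then Real.sqrt (2 * β) else 0) +
      z ⟨k, prefixBits c k⟩)

/-- The per-bit orthogonal-coding error exponent `E(β)`:
`E(β) = (β/(2 ln 2) − 1)·ln 2` if `β > 4 ln 2`,
`E(β) = (√(β/ln 2) − 1)²·ln 2` if `ln 2 < β ≤ 4 ln 2`, and `E(β) = 0`
otherwise. -/
noncomputable def Eperbit (β : ℝ) : ℝ :=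
  if 4 * Real.log 2 < β then (β / (2 * Real.log 2) - 1) * Real.log 2
  else if Real.log 2 < β then (Real.sqrt (β / Real.log 2) - 1) ^ 2 * Real.log 2
  else 0

open Real
open scoped ENNReal

section Gaussian

variable {ι : Type*} [Fintype ι]

lemma mgf_sum_pi_gaussianReal (s : Finset ι) (t : ℝ) :
    mgf (fun z : ι → ℝ => ∑ j ∈ s, z j) (Measure.pi fun _ => gaussianReal 0 1) t
      = exp (s.card * t ^ 2 / 2) := by
  have hindep :
      iIndepFun (fun (j : ι) (z : ι → ℝ) => z j) (Measure.pi fun _ => gaussianReal 0 1) :=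
    iIndepFun_pi (X := fun _ => id) fun _ => aemeasurable_id
  have hlaw (j : ι) : (Measure.pi fun _ => gaussianReal 0 1).map (fun z : ι → ℝ => z j)
      = gaussianReal 0 1 := (measurePreserving_eval _ j).map_eq
  have h := hindep.mgf_sum (fun j => measurable_pi_apply j) s (t := t)
  simp only [mgf_gaussianReal (hlaw _), Finset.prod_const, ← exp_nat_mul] at h
  convert h using 2
  · ext z; simp
  · push_cast; ring

lemma integrable_exp_mul_sum_pi_gaussianReal (s : Finset ι) (t : ℝ) :
    Integrable (fun z : ι → ℝ => exp (t * ∑ j ∈ s, z j))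
      (Measure.pi fun _ => gaussianReal 0 1) :=
  mgf_pos_iff.1 (by rw [mgf_sum_pi_gaussianReal]; positivity)

lemma lintegral_exp_mul_sum_pi_gaussianReal (s : Finset ι) (t : ℝ) :
    ∫⁻ z : ι → ℝ, ENNReal.ofReal (exp (t * ∑ j ∈ s, z j))
        ∂(Measure.pi fun _ => gaussianReal 0 1)
      = ENNReal.ofReal (exp (s.card * t ^ 2 / 2)) := by
  rw [← ofReal_integral_eq_lintegral_ofReal (integrable_exp_mul_sum_pi_gaussianReal s t)
    (Filter.Eventually.of_forall fun _ => (exp_pos _).le), ← mgf_sum_pi_gaussianReal]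
  rfl

lemma pi_gaussianReal_le_sum_le (s : Finset ι) (a : ℝ) {t : ℝ} (ht : 0 ≤ t) :
    (Measure.pi fun _ => gaussianReal 0 1) {z : ι → ℝ | a ≤ ∑ j ∈ s, z j}
      ≤ ENNReal.ofReal (exp (s.card * t ^ 2 / 2 - t * a)) := by
  rw [← ofReal_measureReal]
  refine ENNReal.ofReal_le_ofReal ?_
  have := measure_ge_le_exp_mul_mgf (X := fun z : ι → ℝ => ∑ j ∈ s, z j) a ht
    (integrable_exp_mul_sum_pi_gaussianReal s t)
  rw [mgf_sum_pi_gaussianReal, ← exp_add] at this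
  convert this using 2
  ring

lemma lintegral_rpow_mul_exp_sum_pi_gaussianReal (N : ℕ) (s : Finset ι) (c t : ℝ) {ρ : ℝ}
    (hρ : 0 ≤ ρ) :
    ∫⁻ z : ι → ℝ, ((N : ℝ≥0∞) * ENNReal.ofReal (exp (c + t * ∑ j ∈ s, z j))) ^ ρ
        ∂(Measure.pi fun _ => gaussianReal 0 1)
      = ENNReal.ofReal (N ^ ρ * exp (ρ * c + s.card * (ρ * t) ^ 2 / 2)) := by
  have hpt (z : ι → ℝ) : ((N : ℝ≥0∞) * ENNReal.ofReal (exp (c + t * ∑ j ∈ s, z j))) ^ ρ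
      = ENNReal.ofReal (N ^ ρ * exp (ρ * c)) * ENNReal.ofReal (exp (ρ * t * ∑ j ∈ s, z j)) := by
    rw [← ENNReal.ofReal_natCast, ← ENNReal.ofReal_mul (by positivity),
      ENNReal.ofReal_rpow_of_nonneg (by positivity) hρ, ← ENNReal.ofReal_mul (by positivity),
      mul_rpow (by positivity) (by positivity), ← exp_mul, mul_assoc, ← exp_add]
    congr 3
    ring
  simp_rw [hpt]
  rw [lintegral_const_mul _ (by fun_prop), lintegral_exp_mul_sum_pi_gaussianReal,
    ← ENNReal.ofReal_mul (by positivity), mul_assoc, ← exp_add]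

end Gaussian

section PiSplit

variable {ι M : Type*} [AddCommMonoid M] {p : ι → Prop} [DecidablePred p] {s : Finset ι}

lemma sum_piEquivPiSubtypeProd_symm_of_forall (hs : ∀ j ∈ s, p j) (u : {j // p j} → M)
    (v : {j // ¬p j} → M) :
    ∑ j ∈ s, (Equiv.piEquivPiSubtypeProd p fun _ => M).symm (u, v) j
      = ∑ j ∈ s.subtype p, u j := by
  rw [← Finset.sum_subtype_of_mem _ hs]
  refine Finset.sum_congr rfl fun j _ => ?_
  simp [Equiv.piEquivPiSubtypeProd_symm_apply, j.2]

lemma sum_piEquivPiSubtypeProd_symm_of_forall_not (hs : ∀ j ∈ s, ¬p j) (u : {j // p j} → M)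
    (v : {j // ¬p j} → M) :
    ∑ j ∈ s, (Equiv.piEquivPiSubtypeProd p fun _ => M).symm (u, v) j
      = ∑ j ∈ s.subtype (¬p ·), v j := by
  rw [← Finset.sum_subtype_of_mem _ hs]
  refine Finset.sum_congr rfl fun j _ => ?_
  simp [Equiv.piEquivPiSubtypeProd_symm_apply, j.2]

lemma card_subtype_of_forall (hs : ∀ j ∈ s, p j) : (s.subtype p).card = s.card := by
  rw [Finset.card_subtype, Finset.filter_true_of_mem hs]

end PiSplit

lemma ENNReal.le_rpow_of_le_one_of_le {a y : ℝ≥0∞} {ρ : ℝ} (ha1 : a ≤ 1) (hay : a ≤ y)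
    (hρ0 : 0 ≤ ρ) (hρ1 : ρ ≤ 1) : a ≤ y ^ ρ := by
  rcases le_total y 1 with hy | hy
  · calc a ≤ y := hay
      _ = y ^ (1 : ℝ) := (ENNReal.rpow_one y).symm
      _ ≤ y ^ ρ := ENNReal.rpow_le_rpow_of_exponent_ge hy hρ1
  · calc a ≤ 1 := ha1
      _ = (1 : ℝ≥0∞) ^ ρ := (ENNReal.one_rpow ρ).symm
      _ ≤ y ^ ρ := ENNReal.rpow_le_rpow hy hρ0

theorem prod_le_lintegral_card_mul_rpow_of_subset_iUnion {X Y W : Type*} [MeasurableSpace X]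
    [MeasurableSpace Y] [Fintype W] (μ : Measure X) (ν : Measure Y) [IsProbabilityMeasure ν]
    {A : Set (X × Y)} (hA : MeasurableSet A) (B : W → X → Set Y)
    (hAB : ∀ x, Prod.mk x ⁻¹' A ⊆ ⋃ w, B w x) (g : X → ℝ≥0∞) (hg : ∀ w x, ν (B w x) ≤ g x)
    {ρ : ℝ} (hρ0 : 0 ≤ ρ) (hρ1 : ρ ≤ 1) :
    μ.prod ν A ≤ ∫⁻ x, (Fintype.card W * g x) ^ ρ ∂μ := by
  rw [Measure.prod_apply hA]
  refine lintegral_mono fun x => ENNReal.le_rpow_of_le_one_of_le prob_le_one ?_ hρ0 hρ1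
  calc ν (Prod.mk x ⁻¹' A) ≤ ν (⋃ w, B w x) := measure_mono (hAB x)
    _ ≤ ∑ w, ν (B w x) := measure_iUnion_fintype_le ν _
    _ ≤ ∑ _w : W, g x := Finset.sum_le_sum fun w _ => hg w x
    _ = Fintype.card W * g x := by rw [Finset.sum_const, Finset.card_univ, nsmul_eq_mul]

theorem pi_gaussianReal_orthogonal_error_le {ι W : Type*} [Fintype ι] [Fintype W]
    (S : Finset ι) (T : W → Finset ι) (hST : ∀ w, Disjoint S (T w)) {m : ℕ}
    (hS : S.card = m) (hT : ∀ w, (T w).card = m) {a ρ : ℝ} (ha : 0 ≤ a) (hρ0 : 0 ≤ ρ)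
    (hρ1 : ρ ≤ 1) :
    (Measure.pi fun _ => gaussianReal 0 1)
        {z : ι → ℝ | ∃ w, m * a + ∑ j ∈ S, z j ≤ ∑ j ∈ T w, z j}
      ≤ ENNReal.ofReal (Fintype.card W ^ ρ * exp (-(m * ρ * a ^ 2 / (2 * (1 + ρ))))) := by
  classical
  have hS' : ∀ j ∈ S, j ∈ S := fun _ => id
  have hT' (w) : ∀ j ∈ T w, j ∉ S := fun _ hj => Finset.disjoint_right.1 (hST w) hj
  have hA : MeasurableSet {z : ι → ℝ | ∃ w, m * a + ∑ j ∈ S, z j ≤ ∑ j ∈ T w, z j} := by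
    simp only [Set.ofPred_exists]
    exact MeasurableSet.iUnion fun w => measurableSet_le (by fun_prop) (by fun_prop)
  -- the noise on `S` is independent of the noise off `S`: condition on the former
  rw [← (measurePreserving_piEquivPiSubtypeProd (fun _ => gaussianReal 0 1) (· ∈ S)).symm
    |>.measure_preimage_equiv]
  -- the Chernoff parameter `s` optimising the final exponent
  set s := a / (1 + ρ) with hs
  refine (prod_le_lintegral_card_mul_rpow_of_subset_iUnion _ _
    (hA.preimage (MeasurableEquiv.measurable _))
    (fun w u => {v | m * a + ∑ j ∈ S.subtype (· ∈ S), u j ≤ ∑ j ∈ (T w).subtype (· ∉ S), v j}) ?_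
    (fun u => ENNReal.ofReal (exp (m * (s ^ 2 / 2 - s * a) + -s * ∑ j ∈ S.subtype (· ∈ S), u j)))
    ?_ hρ0 hρ1).trans_eq ?_
  · rintro u v ⟨w, hw⟩
    refine Set.mem_iUnion.2 ⟨w, ?_⟩
    rw [Set.mem_ofPred_eq, ← sum_piEquivPiSubtypeProd_symm_of_forall hS' u v,
      ← sum_piEquivPiSubtypeProd_symm_of_forall_not (hT' w) u v]
    exact hw
  · intro w u
    refine (pi_gaussianReal_le_sum_le _ _ (by positivity : 0 ≤ s)).trans_eq ?_
    rw [card_subtype_of_forall (hT' w), hT]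
    congr 2
    ring
  · simp only [lintegral_rpow_mul_exp_sum_pi_gaussianReal _ _ _ _ hρ0]
    rw [card_subtype_of_forall hS', hS]
    congr 3
    rw [hs]
    field_simp
    ring

section Score

variable {n : ℕ} {b c : Fin n → Bool} {k₀ : Fin n}

lemma prefixBits_eq_of_lt (hpre : ∀ j < k₀, c j = b j) {k : Fin n} (hk : k < k₀) :
    prefixBits c k = prefixBits b k :=
  funext fun t => hpre _ (lt_of_le_of_lt (Fin.le_def.2 (Nat.le_of_lt_succ t.isLt)) hk)

lemma prefixBits_ne_of_le (hne : c k₀ ≠ b k₀) {k : Fin n} (hk : k₀ ≤ k) :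
    prefixBits c k ≠ prefixBits b k :=
  fun h => hne (congrFun h ⟨k₀, Nat.lt_succ_of_le hk⟩)

lemma ppmScore_sub_ppmScore (β : ℝ) (z : PPMIdx n → ℝ) (hpre : ∀ j < k₀, c j = b j)
    (hne : c k₀ ≠ b k₀) :
    ppmScore β b z b - ppmScore β b z c
      = ∑ k ∈ Finset.Ici k₀, (√(2 * β) + z ⟨k, prefixBits b k⟩ - z ⟨k, prefixBits c k⟩) := by
  rw [ppmScore, ppmScore, ← Finset.sum_sub_distrib, ← Finset.filter_le_eq_Ici,
    Finset.sum_filter]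
  refine Finset.sum_congr rfl fun k _ => ?_
  by_cases hk : k₀ ≤ k
  · rw [if_pos hk, if_pos rfl, if_neg (prefixBits_ne_of_le hne hk)]
    ring
  · rw [if_neg hk, prefixBits_eq_of_lt hpre (not_le.1 hk)]
    ring

def ppmPath (c : Fin n → Bool) : Fin n ↪ PPMIdx n :=
  ⟨fun k => ⟨k, prefixBits c k⟩, fun _ _ h => congrArg Sigma.fst h⟩

lemma disjoint_map_ppmPath (hne : c k₀ ≠ b k₀) :
    Disjoint ((Finset.Ici k₀).map (ppmPath b)) ((Finset.Ici k₀).map (ppmPath c)) := by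
  simp only [Finset.disjoint_left, Finset.mem_map, Finset.mem_Ici, not_exists, not_and]
  rintro _ ⟨k, -, rfl⟩ k' hk' h
  obtain ⟨rfl, h⟩ := Sigma.mk.inj_iff.1 h
  exact prefixBits_ne_of_le hne hk' (eq_of_heq h)

lemma add_sum_map_ppmPath_le {β : ℝ} {z : PPMIdx n → ℝ} (hpre : ∀ j < k₀, c j = b j)
    (hne : c k₀ ≠ b k₀) (h : ppmScore β b z b ≤ ppmScore β b z c) :
    ((n - k₀ : ℕ) : ℝ) * √(2 * β) + ∑ j ∈ (Finset.Ici k₀).map (ppmPath b), z j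
      ≤ ∑ j ∈ (Finset.Ici k₀).map (ppmPath c), z j := by
  have hdiff := ppmScore_sub_ppmScore β z hpre hne
  rw [Finset.sum_sub_distrib, Finset.sum_add_distrib, Finset.sum_const, Fin.card_Ici,
    nsmul_eq_mul] at hdiff
  simp only [Finset.sum_map]
  change _ + ∑ k ∈ Finset.Ici k₀, z ⟨k, prefixBits b k⟩
    ≤ ∑ k ∈ Finset.Ici k₀, z ⟨k, prefixBits c k⟩
  linarith

end Score

abbrev Competitor {n : ℕ} (b : Fin n → Bool) (k₀ : Fin n) : Type :=
  {c : Fin n → Bool // (∀ j < k₀, c j = b j) ∧ c k₀ ≠ b k₀}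

lemma card_competitor_le {n : ℕ} (b : Fin n → Bool) (k₀ : Fin n) :
    Fintype.card (Competitor b k₀) ≤ 2 ^ (n - 1 - k₀) := by
  refine (Fintype.card_le_of_injective
    (fun c (t : Fin (n - 1 - k₀)) => c.1 ⟨k₀ + 1 + t, by omega⟩) ?_).trans (by simp)
  rintro ⟨c, hc, hck₀⟩ ⟨c', hc', hc'k₀⟩ h
  refine Subtype.ext (funext fun j => ?_)
  change c j = c' j
  rcases lt_trichotomy j k₀ with hj | rfl | hj
  · rw [hc j hj, hc' j hj]
  · exact (Bool.eq_not_iff.2 hck₀).trans (Bool.eq_not_iff.2 hc'k₀).symm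
  · have := congrFun h ⟨j - k₀ - 1, by omega⟩
    simpa [show (k₀ : ℕ) + 1 + (j - k₀ - 1) = j by omega] using this

lemma exists_Eperbit_le (β : ℝ) :
    ∃ ρ : ℝ, 0 ≤ ρ ∧ ρ ≤ 1 ∧ Eperbit β ≤ ρ * β / (1 + ρ) - ρ * log 2 := by
  have hL : 0 < log 2 := log_pos one_lt_two
  by_cases h4 : 4 * log 2 < β
  · refine ⟨1, zero_le_one, le_rfl, le_of_eq ?_⟩
    rw [Eperbit, if_pos h4]
    field_simp
    ring
  by_cases h1 : log 2 < β
  · set r := √(β / log 2)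
    have hβ : β = r ^ 2 * log 2 := by
      rw [sq_sqrt (div_pos (by linarith) hL).le]; field_simp
    have hr1 : 1 < r := by
      rw [← sqrt_one]; exact sqrt_lt_sqrt zero_le_one ((one_lt_div hL).2 h1)
    have hr2 : r ≤ 2 := by
      rw [show (2 : ℝ) = √(2 ^ 2) from (sqrt_sq zero_le_two).symm]
      exact sqrt_le_sqrt ((div_le_iff₀ hL).2 (by linarith))
    refine ⟨r - 1, by linarith, by linarith, le_of_eq ?_⟩
    rw [Eperbit, if_neg h4, if_pos h1]
    change (r - 1) ^ 2 * log 2 = _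
    rw [hβ, show 1 + (r - 1) = r by ring]
    field_simp
  · exact ⟨0, le_rfl, zero_le_one, by simp [Eperbit, h4, h1]⟩

lemma rpow_mul_exp_le_exp_neg_mul_Eperbit {β ρ : ℝ} {N d : ℕ} (hN : N ≤ 2 ^ d)
    (hρ0 : 0 ≤ ρ) (hE : Eperbit β ≤ ρ * β / (1 + ρ) - ρ * log 2) :
    (N : ℝ) ^ ρ * exp (-((d + 1 : ℕ) * ρ * √(2 * β) ^ 2 / (2 * (1 + ρ))))
      ≤ exp (-((d : ℝ) + 1) * Eperbit β) := by
  have hL : 0 < log 2 := log_pos one_lt_two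
  have hN' : (N : ℝ) ^ ρ ≤ exp (d * (ρ * log 2)) :=
    calc (N : ℝ) ^ ρ ≤ ((2 : ℝ) ^ d) ^ ρ :=
          rpow_le_rpow (by positivity) (by exact_mod_cast hN) hρ0
      _ = exp (d * (ρ * log 2)) := by
          rw [rpow_def_of_pos (by positivity), log_pow]
          ring_nf
  have hsq : ρ * β / (1 + ρ) ≤ ρ * √(2 * β) ^ 2 / (2 * (1 + ρ)) :=
    calc ρ * β / (1 + ρ) = ρ * (2 * β) / (2 * (1 + ρ)) := by field_simp
      _ ≤ ρ * √(2 * β) ^ 2 / (2 * (1 + ρ)) := by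
          gcongr
          rw [sq_sqrt']
          exact le_max_left _ _
  have hm : (0 : ℝ) ≤ d + 1 := by positivity
  calc (N : ℝ) ^ ρ * exp (-((d + 1 : ℕ) * ρ * √(2 * β) ^ 2 / (2 * (1 + ρ))))
      ≤ exp (d * (ρ * log 2)) * exp (-((d + 1) * (ρ * β / (1 + ρ)))) := by
        gcongr
        convert mul_le_mul_of_nonneg_left hsq hm using 1
        push_cast
        ring
    _ ≤ exp (-((d : ℝ) + 1) * Eperbit β) := by
        rw [← exp_add, exp_le_exp]
        nlinarith [mul_le_mul_of_nonneg_left hE hm, mul_nonneg hρ0 hL.le]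

/-- Genie-aided suffix error bound for repeated PPM with ML decoding:
for normalized per-bit energy `β > ln 2` there is a constant `K` (depending
only on `β`) such that for every bit position `i ≥ 1`, every delay `d ≥ 0` and
every true string `b ∈ {0,1}^{i+d}`, the probability that some candidate
string agreeing with `b` in its first `i−1` positions but differing at
position `i` scores at least as high as `b` is at most
`K·exp(−(d+1)·E(β))`. -/
theorem repeatedPPM_suffix_error_bound (β : ℝ) :
    ∃ K : ℝ, 0 < K ∧ ∀ (i d : ℕ) (hi : 1 ≤ i) (b : Fin (i + d) → Bool),
      (Measure.pi fun _ : PPMIdx (i + d) => gaussianReal 0 1)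
          {z | ∃ c : Fin (i + d) → Bool,
            (∀ j : Fin (i + d), (j : ℕ) + 1 < i → c j = b j) ∧
            c ⟨i - 1, by omega⟩ ≠ b ⟨i - 1, by omega⟩ ∧
            ppmScore β b z c ≥ ppmScore β b z b} ≤
        ENNReal.ofReal (K * Real.exp (-((d : ℝ) + 1) * Eperbit β)) := by
  obtain ⟨ρ, hρ0, hρ1, hE⟩ := exists_Eperbit_le β
  refine ⟨1, one_pos, fun i d hi b => ?_⟩
  set k₀ : Fin (i + d) := ⟨i - 1, by omega⟩
  have hm : i + d - k₀ = d + 1 := by simp only [k₀]; omega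
  have hW : Fintype.card (Competitor b k₀) ≤ 2 ^ d :=
    (card_competitor_le b k₀).trans_eq (by simp only [k₀]; congr 1; omega)
  calc _ ≤ (Measure.pi fun _ : PPMIdx (i + d) => gaussianReal 0 1)
        {z | ∃ c : Competitor b k₀,
          ((i + d - k₀ : ℕ) : ℝ) * √(2 * β) + ∑ j ∈ (Finset.Ici k₀).map (ppmPath b), z j
            ≤ ∑ j ∈ (Finset.Ici k₀).map (ppmPath c.1), z j} := by
        refine measure_mono fun z ⟨c, hpre, hne, hscore⟩ => ?_
        have hpre' : ∀ j < k₀, c j = b j := fun j hj => hpre j (by rw [Fin.lt_def] at hj; omega)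
        exact ⟨⟨c, hpre', hne⟩, add_sum_map_ppmPath_le hpre' hne hscore⟩
    _ ≤ _ := pi_gaussianReal_orthogonal_error_le _ _ (fun c => disjoint_map_ppmPath c.2.2)
          (by simp) (fun _ => by simp) (sqrt_nonneg _) hρ0 hρ1
    _ ≤ ENNReal.ofReal (1 * exp (-((d : ℝ) + 1) * Eperbit β)) := by
        rw [one_mul, hm]
        exact ENNReal.ofReal_le_ofReal (rpow_mul_exp_le_exp_neg_mul_Eperbit hW hρ0 hE)
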